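/- arXiv:1808.00844 — 4 statements merged into one kernel-verified Lean document; each statement's English description precedes it below -/
import Mathlib

section
/- Let p be a prime, d ≥ 1, and a_1,…,a_d ∈ F_p^×. Then the rational function f(a_1 x,…,a_d x) ∈ F_p(x) has no pole at x = 0, and its power series expansion at x = 0 is ∑_{k_1,…,k_d ≥ 1} a_1^{k_1−1}⋯a_d^{k_d−1} H_p(k_1,…,k_d) x^{k_1+⋯+k_d−d} ∈ F_p[[x]]; equivalently, for every k ≥ d the coefficient of x^{k−d} in this expansion equals ∑_{k_1,…,k_d ≥ 1, k_1+⋯+k_d=k} a_1^{k_1−1}⋯a_d^{k_d−1} H_p(k_1,…,k_d). -/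
/-!
Since `0 < nᵢ < p`, each `nᵢ` is a unit of `𝔽_p`, so every factor `1/(nᵢ - aᵢx)` of a summand
of `f(a₁x, …, a_dx)` is the geometric series `∑ₖ aᵢᵏ nᵢ^{-(k+1)} xᵏ`; in particular
`f(a₁x, …, a_dx)` is a power series. Multiplying out the `d` factors and writing `kᵢ - 1` for the
exponent taken from the `i`-th one, the coefficient of `x^{k-d}` collects `∏ aᵢ^{kᵢ-1} nᵢ^{-kᵢ}`
over `k₁ + ⋯ + k_d = k`, and summing over the tuples `n` gives the multiple harmonic sums
`H_p(k₁, …, k_d)`.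
-/

/-- `f(x₁, …, x_d) = ∑_{0 < n₁ < ⋯ < n_d < p} 1/((n₁ - x₁) ⋯ (n_d - x_d))` in the rational
function field `𝔽_p(x)`. -/
noncomputable def f (p : ℕ) [Fact p.Prime] {d : ℕ} (x : Fin d → RatFunc (ZMod p)) :
    RatFunc (ZMod p) :=
  ∑ n ∈ Finset.univ.filter
      (fun n : Fin d → Fin p => (∀ i j : Fin d, i < j → n i < n j) ∧ ∀ i, (n i : ℕ) ≠ 0),
    ∏ i, (((n i : ℕ) : RatFunc (ZMod p)) - x i)⁻¹

/-- The multiple harmonic sum `H_p(k₁, …, k_d) = ∑_{0 < n₁ < ⋯ < n_d < p} n₁^{-k₁} ⋯ n_d^{-k_d}`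
in `𝔽_p = ℤ/pℤ`. -/
def H (p : ℕ) {d : ℕ} (k : Fin d → ℕ) : ZMod p :=
  ∑ n ∈ Finset.univ.filter
      (fun n : Fin d → Fin p => (∀ i j : Fin d, i < j → n i < n j) ∧ ∀ i, (n i : ℕ) ≠ 0),
    ∏ i, (((n i : ℕ) : ZMod p) ^ k i)⁻¹

open Finset PowerSeries

section Geometric

variable {K : Type*} [Field K]

theorem PowerSeries.C_sub_C_mul_X_mul_mk_geometric (c a : K) (hc : c ≠ 0) :
    (C c - C a * X) * mk (fun k => a ^ k * (c ^ (k + 1))⁻¹) = 1 := by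
  have hmk : mk (fun k => a ^ k * (c ^ (k + 1))⁻¹) = rescale a (invUnitsSub (Units.mk0 c hc)) := by
    ext k
    simp [coeff_rescale, divp]
  have hC : rescale a (C c) = C c := by
    ext (_ | k) <;> simp [coeff_rescale, coeff_C]
  rw [hmk, ← rescale_X, ← hC, mul_comm, ← map_sub, ← map_mul]
  simpa using congrArg (rescale a) (invUnitsSub_mul_sub (Units.mk0 c hc))

theorem RatFunc.coe_inv_C_sub_C_mul_X (c a : K) (hc : c ≠ 0) :
    (((RatFunc.C c - RatFunc.C a * RatFunc.X)⁻¹ : RatFunc K) : LaurentSeries K) =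
      HahnSeries.ofPowerSeries ℤ K (mk fun k => a ^ k * (c ^ (k + 1))⁻¹) := by
  have hpoly : ((RatFunc.C c - RatFunc.C a * RatFunc.X : RatFunc K) : LaurentSeries K) =
      HahnSeries.ofPowerSeries ℤ K (PowerSeries.C c - PowerSeries.C a * PowerSeries.X) := by
    rw [← RatFunc.algebraMap_C, ← RatFunc.algebraMap_C, ← RatFunc.algebraMap_X, ← map_mul,
      ← map_sub, ← RatFunc.coePolynomial_eq_algebraMap, ← RatFunc.coe_coe]
    simp
  rw [map_inv₀, hpoly]
  refine inv_eq_of_mul_eq_one_right ?_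
  rw [← map_mul, C_sub_C_mul_X_mul_mk_geometric c a hc, map_one]

end Geometric

theorem PowerSeries.coeff_prod_fin {R : Type*} [CommSemiring R] {d : ℕ} (φ : Fin d → R⟦X⟧)
    (m : ℕ) :
    coeff m (∏ i, φ i) = ∑ l ∈ Nat.antidiagonalTuple d m, ∏ i, coeff (l i) (φ i) := by
  classical
  rw [coeff_prod]
  refine sum_equiv Finsupp.equivFunOnFinite (fun l => ?_) (fun l _ => rfl)
  simp [mem_finsuppAntidiag, Nat.mem_antidiagonalTuple]

theorem Finset.Nat.sum_antidiagonalTuple_eq_sum_filter_one_le {M : Type*} [AddCommMonoid M]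
    (d m : ℕ) (F : (Fin d → ℕ) → M) :
    ∑ l ∈ Nat.antidiagonalTuple d m, F l =
      ∑ ks ∈ (Nat.antidiagonalTuple d (m + d)).filter (fun ks => ∀ j, 1 ≤ ks j),
        F (fun j => ks j - 1) := by
  refine sum_nbij' (fun l j => l j + 1) (fun ks j => ks j - 1) ?_ ?_ ?_ ?_ ?_
  · intro l hl
    simp_all [Nat.mem_antidiagonalTuple, sum_add_distrib]
  · intro ks hks
    rw [mem_filter, Nat.mem_antidiagonalTuple] at hks
    rw [Nat.mem_antidiagonalTuple]
    have h := hks.1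
    rw [← sum_congr rfl fun j _ => Nat.sub_add_cancel (hks.2 j), sum_add_distrib] at h
    simpa using h
  · intro l _
    simp
  · intro ks hks
    funext j
    exact Nat.sub_add_cancel ((mem_filter.mp hks).2 j)
  · intro l _
    simp

def harmonicTuples (p d : ℕ) : Finset (Fin d → Fin p) :=
  univ.filter fun n => (∀ i j : Fin d, i < j → n i < n j) ∧ ∀ i, (n i : ℕ) ≠ 0

theorem natCast_ne_zero_of_mem_harmonicTuples {p d : ℕ} {n : Fin d → Fin p}
    (hn : n ∈ harmonicTuples p d) (i : Fin d) : ((n i : ℕ) : ZMod p) ≠ 0 := by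
  rw [Ne, ZMod.natCast_eq_zero_iff]
  exact fun hdvd => (mem_filter.mp hn).2.2 i (Nat.eq_zero_of_dvd_of_lt hdvd (n i).isLt)

theorem coe_f_C_mul_X (p : ℕ) [Fact p.Prime] {d : ℕ} (a : Fin d → ZMod p) :
    ((f p (fun i => RatFunc.C (a i) * RatFunc.X) : RatFunc (ZMod p)) : LaurentSeries (ZMod p)) =
      HahnSeries.ofPowerSeries ℤ (ZMod p) (∑ n ∈ harmonicTuples p d,
        ∏ i, mk fun k => a i ^ k * (((n i : ℕ) : ZMod p) ^ (k + 1))⁻¹) := by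
  rw [f, map_sum, map_sum]
  refine sum_congr rfl fun n hn => ?_
  rw [map_prod, map_prod]
  refine prod_congr rfl fun i _ => ?_
  rw [← map_natCast RatFunc.C]
  exact RatFunc.coe_inv_C_sub_C_mul_X _ _ (natCast_ne_zero_of_mem_harmonicTuples hn i)

theorem coeff_sum_prod_geometric (p : ℕ) {d : ℕ} (a : Fin d → ZMod p) (m : ℕ) :
    coeff m (∑ n ∈ harmonicTuples p d,
        ∏ i, mk fun k => a i ^ k * (((n i : ℕ) : ZMod p) ^ (k + 1))⁻¹) =
      ∑ ks ∈ (Nat.antidiagonalTuple d (m + d)).filter (fun ks => ∀ j, 1 ≤ ks j),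
        (∏ i, a i ^ (ks i - 1)) * H p ks := by
  simp_rw [map_sum, coeff_prod_fin, coeff_mk, Nat.sum_antidiagonalTuple_eq_sum_filter_one_le d m]
  rw [sum_comm]
  refine sum_congr rfl fun ks hks => ?_
  rw [H, mul_sum]
  refine sum_congr rfl fun n _ => ?_
  rw [← prod_mul_distrib]
  refine prod_congr rfl fun i _ => ?_
  rw [Nat.sub_add_cancel ((mem_filter.mp hks).2 i)]

theorem f_expansion_at_zero_general (p : ℕ) [Fact p.Prime] (d : ℕ)
    (a : Fin d → ZMod p) :
    (∀ n : ℤ, n < 0 →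
      ((f p (fun i => RatFunc.C (a i) * RatFunc.X) : RatFunc (ZMod p)) :
        LaurentSeries (ZMod p)).coeff n = 0) ∧
    (∀ k : ℕ, d ≤ k →
      ((f p (fun i => RatFunc.C (a i) * RatFunc.X) : RatFunc (ZMod p)) :
        LaurentSeries (ZMod p)).coeff ((k : ℤ) - (d : ℤ))
        = ∑ ks ∈ (Finset.Nat.antidiagonalTuple d k).filter (fun ks => ∀ j, 1 ≤ ks j),
            (∏ i, a i ^ (ks i - 1)) * H p ks) := by
  rw [coe_f_C_mul_X]
  refine ⟨fun n hn => by rw [coeff_coe, if_pos hn], fun k hk => ?_⟩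
  obtain ⟨m, rfl⟩ := Nat.exists_eq_add_of_le' hk
  rw [show ((m + d : ℕ) : ℤ) - d = m by push_cast; ring, LaurentSeries.coeff_coe_powerSeries,
    coeff_sum_prod_geometric]

/-- For a prime `p`, `d ≥ 1` and `a₁, …, a_d ∈ 𝔽_p^×`, the rational function
`f(a₁x, …, a_d x)` has no pole at `x = 0` (its Laurent expansion at `0` has no negative-index
coefficients), and its power series expansion at `x = 0` is
`∑_{k₁,…,k_d ≥ 1} a₁^{k₁-1} ⋯ a_d^{k_d-1} H_p(k₁,…,k_d) x^{k₁+⋯+k_d-d}`: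
for every `k ≥ d` the coefficient of `x^{k-d}` equals
`∑_{k₁+⋯+k_d=k, kⱼ ≥ 1} a₁^{k₁-1} ⋯ a_d^{k_d-1} H_p(k₁,…,k_d)`. -/
theorem f_expansion_at_zero (p : ℕ) [Fact p.Prime] (d : ℕ) (hd : 1 ≤ d)
    (a : Fin d → ZMod p) (ha : ∀ i, a i ≠ 0) :
    (∀ n : ℤ, n < 0 →
      ((f p (fun i => RatFunc.C (a i) * RatFunc.X) : RatFunc (ZMod p)) :
        LaurentSeries (ZMod p)).coeff n = 0) ∧
    (∀ k : ℕ, d ≤ k →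
      ((f p (fun i => RatFunc.C (a i) * RatFunc.X) : RatFunc (ZMod p)) :
        LaurentSeries (ZMod p)).coeff ((k : ℤ) - (d : ℤ))
        = ∑ ks ∈ (Finset.Nat.antidiagonalTuple d k).filter (fun ks => ∀ j, 1 ≤ ks j),
            (∏ i, a i ^ (ks i - 1)) * H p ks) :=
  f_expansion_at_zero_general p d a
end

section
/- Let p be an odd prime and a, b ≥ 0 integers. Then in F_p(x) one has G_{a,b}(x−1) − S_{a,b}(x) = (1/(x−1))·G_{a−1,b}(x−1) − (1/x)·S_{a,b−1}(x). -/
/-- `G_{a,b}`, as a function of the substituted variable `t`: for `a, b ≥ 0` it is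
`f(t,…,t,2t,t,…,t)` with `a` copies of `t` before `2t` and `b` copies after;
for `a = -1` or `b = -1` it is `(1/2)·f(t,…,t)` with `a+b+1` copies of `t`. -/
noncomputable def G (p : ℕ) [Fact p.Prime] (a b : ℤ) (t : RatFunc (ZMod p)) :
    RatFunc (ZMod p) :=
  if 0 ≤ a ∧ 0 ≤ b then
    f p (fun i : Fin (a + b + 1).toNat => if (i : ℤ) = a then 2 * t else t)
  else (1 / 2) * f p (fun _ : Fin (a + b + 1).toNat => t)

/-- `S_{a,b}`, as a function of the substituted variable `t`: for `a, b ≥ 0` it is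
`f(t,…,t,2t-1,t,…,t)` with `a` copies of `t` before `2t-1` and `b` copies after;
for `a = -1` or `b = -1` it is `(t/(2t-1))·f(t,…,t)` with `a+b+1` copies of `t`. -/
noncomputable def S (p : ℕ) [Fact p.Prime] (a b : ℤ) (t : RatFunc (ZMod p)) :
    RatFunc (ZMod p) :=
  if 0 ≤ a ∧ 0 ≤ b then
    f p (fun i : Fin (a + b + 1).toNat => if (i : ℤ) = a then 2 * t - 1 else t)
  else (t / (2 * t - 1)) * f p (fun _ : Fin (a + b + 1).toNat => t)

/-! ### Auxiliary nested-sum machinery -/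

section Aux
variable {K : Type*} [Field K]

/-- Nested sum `∑_{lo < n₁ < ⋯ < n_e < hi} g₁(n₁) ⋯ g_e(n_e)`, recursing on the list. -/
noncomputable def T (hi : ℕ) : List (ℕ → K) → ℕ → K
  | [], _ => 1
  | g :: gs, lo => ∑ n ∈ Finset.Ioo lo hi, g n * T hi gs n

lemma T_nil (hi lo : ℕ) : T hi ([] : List (ℕ → K)) lo = 1 := rfl

lemma T_cons (hi lo : ℕ) (g : ℕ → K) (gs) :
    T hi (g :: gs) lo = ∑ n ∈ Finset.Ioo lo hi, g n * T hi gs n := rfl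

lemma T_cons_zero (hi lo : ℕ) (g : ℕ → K) (gs) (h : hi ≤ lo + 1) :
    T hi (g :: gs) lo = 0 := by
  rw [T_cons]
  have : Finset.Ioo lo hi = ∅ := by ext m; simp; omega
  rw [this, Finset.sum_empty]

lemma T_ne_nil_zero (hi lo : ℕ) (L : List (ℕ → K)) (hL : L ≠ []) (h : hi ≤ lo + 1) :
    T hi L lo = 0 := by
  cases L with
  | nil => exact absurd rfl hL
  | cons g gs => exact T_cons_zero hi lo g gs h

lemma T_shift (hi : ℕ) (L : List (ℕ → K)) : ∀ lo,
    T hi (L.map (fun g n => g (n + 1))) lo = T (hi + 1) L (lo + 1) := by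
  induction L with
  | nil => intro lo; rfl
  | cons g gs ih =>
    intro lo
    rw [List.map_cons, T_cons, T_cons]
    rw [← Finset.map_add_right_Ioo lo hi 1, Finset.sum_map]
    refine Finset.sum_congr rfl fun n hn => ?_
    simp only [addRightEmbedding_apply]
    rw [ih n]

lemma T_top (hi : ℕ) (g : ℕ → K) (L : List (ℕ → K)) : ∀ lo, lo < hi →
    T (hi + 1) (L ++ [g]) lo = T hi (L ++ [g]) lo + g hi * T hi L lo := by
  induction L with
  | nil =>
    intro lo h
    simp only [List.nil_append, T_cons, T_nil, mul_one]
    have : Finset.Ioo lo (hi + 1) = insert hi (Finset.Ioo lo hi) := by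
      ext m; simp; omega
    rw [this, Finset.sum_insert (by simp)]
    ring
  | cons g' L' ih =>
    intro lo h
    rw [List.cons_append, T_cons]
    have : Finset.Ioo lo (hi + 1) = insert hi (Finset.Ioo lo hi) := by
      ext m; simp; omega
    rw [this, Finset.sum_insert (by simp)]
    rw [T_ne_nil_zero _ _ _ (by simp) (le_refl _), mul_zero, zero_add]
    rw [Finset.sum_congr rfl (fun n hn => by
      rw [ih n (Finset.mem_Ioo.mp hn).2])]
    simp only [mul_add, Finset.sum_add_distrib]
    rw [T_cons, T_cons]
    congr 1
    rw [Finset.mul_sum]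
    refine Finset.sum_congr rfl fun n hn => ?_
    ring

lemma T_bot (hi lo : ℕ) (h : lo + 1 < hi) (g : ℕ → K) (L : List (ℕ → K)) :
    T hi (g :: L) lo = T hi (g :: L) (lo + 1) + g (lo + 1) * T hi L (lo + 1) := by
  rw [T_cons, T_cons]
  have : Finset.Ioo lo hi = insert (lo + 1) (Finset.Ioo (lo + 1) hi) := by
    ext m; simp; omega
  rw [this, Finset.sum_insert (by simp)]
  ring

lemma cons_cond_iff (p d : ℕ) (lo : ℕ) (c : Fin p) (t : Fin d → Fin p) :
    ((∀ i j : Fin (d + 1), i < j → (Fin.cons c t : Fin (d + 1) → Fin p) i <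
        (Fin.cons c t : Fin (d + 1) → Fin p) j) ∧
      ∀ i, lo < ((Fin.cons c t : Fin (d + 1) → Fin p) i : Fin p).val)
    ↔ (lo < (c : ℕ)) ∧ ((∀ i j : Fin d, i < j → t i < t j) ∧ ∀ i, (c : ℕ) < (t i : ℕ)) := by
  constructor
  · rintro ⟨h1, h2⟩
    refine ⟨?_, fun i j hij => ?_, fun i => ?_⟩
    · have := h2 0
      rwa [Fin.cons_zero] at this
    · have := h1 i.succ j.succ (Fin.succ_lt_succ_iff.mpr hij)
      rwa [Fin.cons_succ, Fin.cons_succ] at this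
    · have := h1 0 i.succ (Fin.succ_pos i)
      rw [Fin.cons_zero, Fin.cons_succ] at this
      exact this
  · rintro ⟨h0, h1, h2⟩
    constructor
    · intro i j hij
      induction i using Fin.cases with
      | zero =>
        induction j using Fin.cases with
        | zero => exact absurd hij (lt_irrefl _)
        | succ j' =>
          rw [Fin.cons_zero, Fin.cons_succ]
          exact Fin.lt_def.mpr (h2 j')
      | succ i' =>
        induction j using Fin.cases with
        | zero => exact absurd hij (Fin.not_lt_zero _)
        | succ j' =>
          rw [Fin.cons_succ, Fin.cons_succ]
          exact h1 i' j' (Fin.succ_lt_succ_iff.mp hij)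
    · intro i
      induction i using Fin.cases with
      | zero => rw [Fin.cons_zero]; exact h0
      | succ i' =>
        rw [Fin.cons_succ]
        have := h2 i'
        omega

lemma sum_eq_T (p : ℕ) : ∀ (d : ℕ) (g : Fin d → ℕ → K) (lo : ℕ),
    (∑ n ∈ Finset.univ.filter
        (fun n : Fin d → Fin p =>
          (∀ i j : Fin d, i < j → n i < n j) ∧ ∀ i, lo < (n i : ℕ)),
      ∏ i, g i (n i : ℕ)) = T p (List.ofFn g) lo := by
  intro d
  induction d with
  | zero =>
    intro g lo
    rw [Finset.filter_true_of_mem (fun n _ => ⟨fun i => i.elim0, fun i => i.elim0⟩)]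
    simp [T_nil]
  | succ d ih =>
    intro g lo
    rw [Finset.sum_filter]
    rw [← Equiv.sum_comp (Fin.consEquiv (fun _ => Fin p))]
    rw [Fintype.sum_prod_type]
    have key : ∀ c : Fin p,
        (∑ t : Fin d → Fin p,
          if (∀ i j : Fin (d+1), i < j → (Fin.consEquiv (fun _ => Fin p)) (c, t) i <
                (Fin.consEquiv (fun _ => Fin p)) (c, t) j) ∧
              ∀ i, lo < ((Fin.consEquiv (fun _ => Fin p)) (c, t) i : ℕ) then
            ∏ i, g i (((Fin.consEquiv (fun _ => Fin p)) (c, t) i : Fin p) : ℕ) else 0)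
        = if lo < (c : ℕ) then
            g 0 (c : ℕ) * T p (List.ofFn (fun i : Fin d => g i.succ)) (c : ℕ) else 0 := by
      intro c
      have heq : ∀ t : Fin d → Fin p, (Fin.consEquiv (fun _ => Fin p)) (c, t) = Fin.cons c t :=
        fun t => rfl
      simp only [heq]
      by_cases hc : lo < (c : ℕ)
      · simp only [cons_cond_iff, hc, true_and, Fin.prod_univ_succ, Fin.cons_zero,
          Fin.cons_succ]
        rw [← ih (fun i => g i.succ) (c : ℕ), Finset.sum_filter, Finset.mul_sum]
        refine Finset.sum_congr rfl fun t _ => ?_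
        rw [mul_ite, mul_zero]
      · simp only [cons_cond_iff, hc, false_and, if_false, Finset.sum_const_zero]
    rw [Finset.sum_congr rfl (fun c _ => key c)]
    rw [Fin.sum_univ_eq_sum_range
      (fun m => if lo < m then g 0 m * T p (List.ofFn (fun i : Fin d => g i.succ)) m else 0)]
    rw [← Finset.sum_filter]
    have hIoo : (Finset.range p).filter (fun m => lo < m) = Finset.Ioo lo p := by
      ext m; simp; omega
    rw [hIoo, List.ofFn_succ, T_cons]

end Aux

lemma ofFn_ite {α : Type*} (y z : α) : ∀ a b : ℕ,
    List.ofFn (fun i : Fin (a + b + 1) => if (i : ℕ) = a then y else z)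
      = List.replicate a z ++ y :: List.replicate b z := by
  intro a
  induction a with
  | zero =>
    intro b
    rw [List.ofFn_succ]
    simp
  | succ a ih =>
    intro b
    rw [List.ofFn_succ]
    have h1 : (0 : ℕ) ≠ a + 1 := by omega
    simp only [Fin.val_zero, Fin.val_succ, h1, if_false, Nat.add_right_cancel_iff]
    have h2 : a + 1 + b = a + b + 1 := by omega
    rw [h2, ih b, List.replicate_succ, List.cons_append]

lemma ofFn_ite2 {α : Type*} (y z : α) (a b : ℕ) :
    List.ofFn (fun i : Fin (((a : ℤ) + (b : ℤ) + 1).toNat) =>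
        if (i : ℤ) = (a : ℤ) then y else z)
      = List.replicate a z ++ y :: List.replicate b z := by
  have ht : ((a : ℤ) + (b : ℤ) + 1).toNat = a + b + 1 := by omega
  rw [List.ofFn_congr ht]
  rw [← ofFn_ite y z a b]
  congr 1
  funext i
  have : ((Fin.cast ht.symm i : Fin (((a : ℤ) + (b : ℤ) + 1).toNat)) : ℤ) = ((i : ℕ) : ℤ) := by
    simp
  rw [this]
  simp [Nat.cast_inj]

section Eval

variable (p : ℕ) [Fact p.Prime]

/-- `1/(n - x)` -/
noncomputable def sfun : ℕ → RatFunc (ZMod p) :=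
  fun n => ((n : RatFunc (ZMod p)) - RatFunc.X)⁻¹

/-- `1/(n - (2x-1))` -/
noncomputable def wfun : ℕ → RatFunc (ZMod p) :=
  fun n => ((n : RatFunc (ZMod p)) - (2 * RatFunc.X - 1))⁻¹

/-- `1/(n - (x-1))` -/
noncomputable def ufun : ℕ → RatFunc (ZMod p) :=
  fun n => ((n : RatFunc (ZMod p)) - (RatFunc.X - 1))⁻¹

/-- `1/(n - 2(x-1))` -/
noncomputable def vfun : ℕ → RatFunc (ZMod p) :=
  fun n => ((n : RatFunc (ZMod p)) - 2 * (RatFunc.X - 1))⁻¹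

noncomputable def Ls (a b : ℕ) : List (ℕ → RatFunc (ZMod p)) :=
  List.replicate a (sfun p) ++ wfun p :: List.replicate b (sfun p)

lemma f_eq_T {d : ℕ} (x : Fin d → RatFunc (ZMod p)) :
    f p x = T p (List.ofFn (fun i => fun m : ℕ => ((m : RatFunc (ZMod p)) - x i)⁻¹)) 0 := by
  rw [f, ← sum_eq_T p d (fun i => fun m : ℕ => ((m : RatFunc (ZMod p)) - x i)⁻¹) 0]
  apply Finset.sum_congr
  · ext n
    simp [Nat.pos_iff_ne_zero]
  · intros
    rfl

lemma ufun_shift : ufun p = fun n => sfun p (n + 1) := by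
  funext n
  rw [ufun, sfun]
  congr 1
  push_cast
  ring

lemma vfun_shift : vfun p = fun n => wfun p (n + 1) := by
  funext n
  rw [vfun, wfun]
  congr 1
  push_cast
  ring

lemma G_eval (a b : ℕ) :
    G p a b (RatFunc.X - 1) = T (p + 1) (Ls p a b) 1 := by
  rw [G, if_pos ⟨Int.natCast_nonneg a, Int.natCast_nonneg b⟩, f_eq_T]
  have hfun : (fun i : Fin (((a : ℤ) + (b : ℤ) + 1).toNat) => fun m : ℕ =>
      ((m : RatFunc (ZMod p)) -
        (if (i : ℤ) = (a : ℤ) then 2 * (RatFunc.X - 1) else RatFunc.X - 1))⁻¹)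
      = fun i : Fin (((a : ℤ) + (b : ℤ) + 1).toNat) =>
          if (i : ℤ) = (a : ℤ) then vfun p else ufun p := by
    funext i
    split <;> rfl
  rw [hfun, ofFn_ite2]
  have hmap : List.replicate a (ufun p) ++ vfun p :: List.replicate b (ufun p)
      = (Ls p a b).map (fun g n => g (n + 1)) := by
    rw [Ls, List.map_append, List.map_cons, List.map_replicate, List.map_replicate,
      ← ufun_shift, ← vfun_shift]
  rw [hmap, T_shift]

lemma S_eval (a b : ℕ) :
    S p a b RatFunc.X = T p (Ls p a b) 0 := by
  rw [S, if_pos ⟨Int.natCast_nonneg a, Int.natCast_nonneg b⟩, f_eq_T]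
  have hfun : (fun i : Fin (((a : ℤ) + (b : ℤ) + 1).toNat) => fun m : ℕ =>
      ((m : RatFunc (ZMod p)) -
        (if (i : ℤ) = (a : ℤ) then 2 * RatFunc.X - 1 else RatFunc.X))⁻¹)
      = fun i : Fin (((a : ℤ) + (b : ℤ) + 1).toNat) =>
          if (i : ℤ) = (a : ℤ) then wfun p else sfun p := by
    funext i
    split <;> rfl
  rw [hfun, ofFn_ite2, Ls]

lemma G_neg (b : ℕ) :
    G p (((0 : ℕ) : ℤ) - 1) b (RatFunc.X - 1)
      = (1 / 2) * T (p + 1) (List.replicate b (sfun p)) 1 := by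
  rw [G, if_neg (fun h => by omega), f_eq_T]
  congr 1
  have ht : ((((0 : ℕ) : ℤ) - 1) + (b : ℤ) + 1).toNat = b := by omega
  rw [List.ofFn_congr ht]
  have : (fun i : Fin b => (fun i : Fin ((((0 : ℕ) : ℤ) - 1 + (b : ℤ) + 1).toNat) =>
      fun m : ℕ => ((m : RatFunc (ZMod p)) - (RatFunc.X - 1))⁻¹) (Fin.cast ht.symm i))
      = fun _ : Fin b => ufun p := rfl
  rw [this, List.ofFn_const]
  have hmap : List.replicate b (ufun p)
      = (List.replicate b (sfun p)).map (fun g n => g (n + 1)) := by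
    rw [List.map_replicate, ← ufun_shift]
  rw [hmap, T_shift]

lemma S_neg (a : ℕ) :
    S p a (((0 : ℕ) : ℤ) - 1) RatFunc.X
      = (RatFunc.X / (2 * RatFunc.X - 1)) * T p (List.replicate a (sfun p)) 0 := by
  rw [S, if_neg (fun h => by omega), f_eq_T]
  congr 1
  have ht : ((a : ℤ) + (((0 : ℕ) : ℤ) - 1) + 1).toNat = a := by omega
  rw [List.ofFn_congr ht]
  have : (fun i : Fin a => (fun i : Fin (((a : ℤ) + (((0 : ℕ) : ℤ) - 1) + 1).toNat) =>
      fun m : ℕ => ((m : RatFunc (ZMod p)) - RatFunc.X)⁻¹) (Fin.cast ht.symm i))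
      = fun _ : Fin a => sfun p := rfl
  rw [this, List.ofFn_const]

end Eval

/-- Difference equation: for an odd prime `p` and integers `a, b ≥ 0`,
`G_{a,b}(x-1) - S_{a,b}(x) = (x-1)⁻¹ G_{a-1,b}(x-1) - x⁻¹ S_{a,b-1}(x)` in `𝔽_p(x)`. -/
theorem G_sub_S_difference_equation (p : ℕ) [Fact p.Prime] (hp2 : p ≠ 2) (a b : ℕ) :
    G p a b (RatFunc.X - 1) - S p a b RatFunc.X
      = (RatFunc.X - 1)⁻¹ * G p ((a : ℤ) - 1) b (RatFunc.X - 1)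
        - (RatFunc.X)⁻¹ * S p a ((b : ℤ) - 1) RatFunc.X := by
  have h1p : 1 < p := (Fact.out : p.Prime).one_lt
  have hp0 : ((p : ℕ) : RatFunc (ZMod p)) = 0 := by
    rw [← map_natCast (algebraMap (ZMod p) (RatFunc (ZMod p))), ZMod.natCast_self, map_zero]
  have hsp : sfun p p = -RatFunc.X⁻¹ := by
    simp only [sfun]
    rw [hp0, zero_sub, inv_neg]
  have hs1 : sfun p 1 = -(RatFunc.X - 1)⁻¹ := by
    simp only [sfun]
    rw [show ((1 : ℕ) : RatFunc (ZMod p)) - RatFunc.X = -(RatFunc.X - 1) from by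
      push_cast; ring, inv_neg]
  have hwp : wfun p p = -(2 * RatFunc.X - 1)⁻¹ := by
    simp only [wfun]
    rw [hp0, zero_sub, inv_neg]
  have hw1 : wfun p 1 = -(2⁻¹ * (RatFunc.X - 1)⁻¹) := by
    simp only [wfun]
    rw [show ((1 : ℕ) : RatFunc (ZMod p)) - (2 * RatFunc.X - 1)
        = -(2 * (RatFunc.X - 1)) from by push_cast; ring, inv_neg, mul_inv]
  have hXD : ∀ t : RatFunc (ZMod p),
      RatFunc.X⁻¹ * (RatFunc.X / (2 * RatFunc.X - 1) * t) = (2 * RatFunc.X - 1)⁻¹ * t := by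
    intro t
    rw [div_eq_mul_inv, show RatFunc.X⁻¹ * (RatFunc.X * (2 * RatFunc.X - 1)⁻¹ * t)
        = (RatFunc.X⁻¹ * RatFunc.X) * ((2 * RatFunc.X - 1)⁻¹ * t) from by ring,
      inv_mul_cancel₀ RatFunc.X_ne_zero, one_mul]
  have happ : ∀ (c d : ℕ), Ls p c (d + 1) = Ls p c d ++ [sfun p] := by
    intro c d
    rw [Ls, Ls, List.replicate_succ']
    simp [List.append_assoc]
  have h01 : (0 : ℕ) + 1 = 1 := rfl
  rcases a with _ | a' <;> rcases b with _ | b'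
  · -- a = 0, b = 0
    rw [G_eval, S_eval, G_neg, S_neg]
    have e1 : T (p + 1) [wfun p] 1
        = T p [wfun p] 1 + wfun p p * 1 := by
      have := T_top p (wfun p) [] 1 h1p
      rw [T_nil] at this
      exact this
    have e2 : T p [wfun p] 0 = T p [wfun p] 1 + wfun p 1 * 1 := by
      have := T_bot p 0 (by omega) (wfun p) []
      rw [h01, T_nil] at this
      exact this
    have hLs : Ls p 0 0 = [wfun p] := rfl
    rw [hLs, e1, e2, List.replicate_zero, T_nil, T_nil, hwp, hw1, hXD]
    ring
  · -- a = 0, b = b' + 1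
    rw [G_eval, S_eval, G_neg,
      show ((b' + 1 : ℕ) : ℤ) - 1 = ((b' : ℕ) : ℤ) from by push_cast; ring, S_eval]
    have hA : T (p + 1) (Ls p 0 (b' + 1)) 1
        = T p (Ls p 0 (b' + 1)) 1 + sfun p p * T p (Ls p 0 b') 1 := by
      rw [happ 0 b']
      exact T_top p (sfun p) (Ls p 0 b') 1 h1p
    have hB : T p (Ls p 0 (b' + 1)) 0
        = T p (Ls p 0 (b' + 1)) 1 + wfun p 1 * T p (List.replicate (b' + 1) (sfun p)) 1 := by
      have := T_bot p 0 (by omega) (wfun p) (List.replicate (b' + 1) (sfun p))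
      rw [h01] at this
      exact this
    have hC : T (p + 1) (List.replicate (b' + 1) (sfun p)) 1
        = T p (List.replicate (b' + 1) (sfun p)) 1
          + sfun p p * T p (List.replicate b' (sfun p)) 1 := by
      rw [List.replicate_succ']
      exact T_top p (sfun p) (List.replicate b' (sfun p)) 1 h1p
    have hD : T p (Ls p 0 b') 0
        = T p (Ls p 0 b') 1 + wfun p 1 * T p (List.replicate b' (sfun p)) 1 := by
      have := T_bot p 0 (by omega) (wfun p) (List.replicate b' (sfun p))
      rw [h01] at this
      exact this
    rw [hA, hB, hC, hD, hsp, hw1]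
    ring
  · -- a = a' + 1, b = 0
    rw [G_eval, S_eval, S_neg,
      show ((a' + 1 : ℕ) : ℤ) - 1 = ((a' : ℕ) : ℤ) from by push_cast; ring, G_eval]
    have hA : T (p + 1) (Ls p (a' + 1) 0) 1
        = T p (Ls p (a' + 1) 0) 1 + wfun p p * T p (List.replicate (a' + 1) (sfun p)) 1 := by
      exact T_top p (wfun p) (List.replicate (a' + 1) (sfun p)) 1 h1p
    have hB : T p (Ls p (a' + 1) 0) 0
        = T p (Ls p (a' + 1) 0) 1 + sfun p 1 * T p (Ls p a' 0) 1 := by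
      have := T_bot p 0 (by omega) (sfun p) (Ls p a' 0)
      rw [h01] at this
      exact this
    have hC : T (p + 1) (Ls p a' 0) 1
        = T p (Ls p a' 0) 1 + wfun p p * T p (List.replicate a' (sfun p)) 1 := by
      exact T_top p (wfun p) (List.replicate a' (sfun p)) 1 h1p
    have hD : T p (List.replicate (a' + 1) (sfun p)) 0
        = T p (List.replicate (a' + 1) (sfun p)) 1
          + sfun p 1 * T p (List.replicate a' (sfun p)) 1 := by
      have := T_bot p 0 (by omega) (sfun p) (List.replicate a' (sfun p))
      rw [h01] at this
      exact this
    rw [hA, hB, hC, hD, hwp, hs1, hXD]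
    ring
  · -- a = a' + 1, b = b' + 1
    rw [G_eval, S_eval,
      show ((a' + 1 : ℕ) : ℤ) - 1 = ((a' : ℕ) : ℤ) from by push_cast; ring,
      show ((b' + 1 : ℕ) : ℤ) - 1 = ((b' : ℕ) : ℤ) from by push_cast; ring,
      G_eval, S_eval]
    have hA : T (p + 1) (Ls p (a' + 1) (b' + 1)) 1
        = T p (Ls p (a' + 1) (b' + 1)) 1 + sfun p p * T p (Ls p (a' + 1) b') 1 := by
      rw [happ (a' + 1) b']
      exact T_top p (sfun p) (Ls p (a' + 1) b') 1 h1p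
    have hB : T p (Ls p (a' + 1) (b' + 1)) 0
        = T p (Ls p (a' + 1) (b' + 1)) 1 + sfun p 1 * T p (Ls p a' (b' + 1)) 1 := by
      have := T_bot p 0 (by omega) (sfun p) (Ls p a' (b' + 1))
      rw [h01] at this
      exact this
    have hC : T (p + 1) (Ls p a' (b' + 1)) 1
        = T p (Ls p a' (b' + 1)) 1 + sfun p p * T p (Ls p a' b') 1 := by
      rw [happ a' b']
      exact T_top p (sfun p) (Ls p a' b') 1 h1p
    have hD : T p (Ls p (a' + 1) b') 0
        = T p (Ls p (a' + 1) b') 1 + sfun p 1 * T p (Ls p a' b') 1 := by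
      have := T_bot p 0 (by omega) (sfun p) (Ls p a' b')
      rw [h01] at this
      exact this
    rw [hA, hB, hC, hD, hsp, hs1]
    ring
end

section
/- Let p be an odd prime and a, b ≥ 0 integers with a + b < p. Then in F_p(x) one has S_{a,b}(x) − G_{a,b}(x) = (1/(x(x−1)))·f(x,…,x) − (1/(x−1))·S_{a−1,b}(x) + (1/x)·G_{a,b−1}(x), where f(x,…,x) has a+b copies of x. -/
/-!
Every value of `f` is an iterated sum `mhs lo hi [c₁, …, c_d]` over `lo < n₁ < ⋯ < n_d < hi`.
Splitting at the index `m` of the distinguished entry,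
`S_{a,b} - G_{a,b} = ∑ₘ A(m) B(m) ((m + 1 - 2x)⁻¹ - (m - 2x)⁻¹)`, where `A(m)` sums over the `a`
indices below `m` and `B(m)` over the `b` indices above it. Summation by parts moves the difference
onto `A(m + 1) - A(m) = A'(m) (m - x)⁻¹` and `B(m - 1) - B(m) = (m - x)⁻¹ B'(m)`, and the partial
fractions `(m - x)⁻¹ (m + 1 - 2x)⁻¹ = (x - 1)⁻¹ ((m + 1 - 2x)⁻¹ - (m - x)⁻¹)` and
`(m - 2x)⁻¹ (m - x)⁻¹ = x⁻¹ ((m - 2x)⁻¹ - (m - x)⁻¹)` reassemble the two sums into `S_{a-1,b}`,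
`G_{a,b-1}` and `f(x, …, x)`. For `a = 0` (resp. `b = 0`) only a boundary term of the summation by
parts survives; it produces the conventions for `S_{-1,b}` (resp. `G_{a,-1}`, using `p = 0`).
-/

open Finset

section MultipleHarmonicSum

variable {K : Type*} [Field K]

def mhs : ℕ → ℕ → List K → K
  | _, _, [] => 1
  | lo, hi, c :: cs => ∑ m ∈ Ico (lo + 1) hi, ((m : K) - c)⁻¹ * mhs m hi cs

@[simp] lemma mhs_nil (lo hi : ℕ) : mhs lo hi ([] : List K) = 1 := rfl

lemma mhs_cons (lo hi : ℕ) (c : K) (cs : List K) :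
    mhs lo hi (c :: cs) = ∑ m ∈ Ico (lo + 1) hi, ((m : K) - c)⁻¹ * mhs m hi cs := rfl

lemma mhs_cons_eq_zero {lo hi : ℕ} (h : hi ≤ lo + 1) (c : K) (cs : List K) :
    mhs lo hi (c :: cs) = 0 := by
  rw [mhs_cons, Ico_eq_empty_of_le h, sum_empty]

lemma mhs_append_cons (lo hi : ℕ) (u : List K) (c : K) (v : List K) :
    mhs lo hi (u ++ c :: v) = ∑ m ∈ Ico (lo + 1) hi, mhs lo m u * ((m : K) - c)⁻¹ * mhs m hi v := by
  induction u generalizing lo with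
  | nil => simp [mhs_cons]
  | cons c' u ih =>
    simp only [List.cons_append, mhs_cons, ih, mul_sum, sum_mul, mul_assoc]
    exact sum_comm' fun n m => by simp only [mem_Ico]; omega

lemma mhs_succ_append_singleton_sub {lo m : ℕ} (h : lo < m) (u : List K) (c : K) :
    mhs lo (m + 1) (u ++ [c]) - mhs lo m (u ++ [c]) = mhs lo m u * ((m : K) - c)⁻¹ := by
  rw [mhs_append_cons, mhs_append_cons, sum_Ico_succ_top h]
  simp

lemma mhs_pred_cons_sub {m hi : ℕ} (hm : 0 < m) (h : m < hi) (c : K) (cs : List K) :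
    mhs (m - 1) hi (c :: cs) - mhs m hi (c :: cs) = ((m : K) - c)⁻¹ * mhs m hi cs := by
  rw [mhs_cons, sum_eq_sum_Ico_succ_bot (by omega), Nat.sub_add_cancel hm, mhs_cons]
  ring

lemma mhs_append_sub_one_cons_sub {N : ℕ} (hN : 1 ≤ N) (u : List K) (y : K) (v : List K) :
    mhs 0 N (u ++ (y - 1) :: v) - mhs 0 N (u ++ y :: v)
      = (mhs 0 N u * ((N : K) - y)⁻¹ * mhs (N - 1) N v
          + ∑ m ∈ Ico 1 N, mhs 0 m u * ((m : K) - y)⁻¹ * (mhs (m - 1) N v - mhs m N v))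
        - (mhs 0 1 u * (1 - y)⁻¹ * mhs 0 N v
          + ∑ m ∈ Ico 1 N, (mhs 0 (m + 1) u - mhs 0 m u) * ((m : K) - (y - 1))⁻¹ * mhs m N v) := by
  set boundary : ℕ → K := fun k => mhs 0 k u * ((k : K) - y)⁻¹ * mhs (k - 1) N v
  have summand (m : ℕ) :
      mhs 0 m u * ((m : K) - (y - 1))⁻¹ * mhs m N v - mhs 0 m u * ((m : K) - y)⁻¹ * mhs m N v
        = (boundary (m + 1) - boundary m)
          + mhs 0 m u * ((m : K) - y)⁻¹ * (mhs (m - 1) N v - mhs m N v)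
          - (mhs 0 (m + 1) u - mhs 0 m u) * ((m : K) - (y - 1))⁻¹ * mhs m N v := by
    simp only [boundary, Nat.add_sub_cancel, Nat.cast_succ, sub_sub_eq_add_sub]
    ring
  rw [mhs_append_cons, mhs_append_cons, ← sum_sub_distrib, sum_congr rfl fun m _ => summand m,
    sum_sub_distrib, sum_add_distrib, sum_Ico_sub boundary hN]
  simp only [boundary, Nat.cast_one, Nat.sub_self]
  ring

lemma sum_strictMono_prod_inv_eq_mhs {d : ℕ} (lo N : ℕ) (x : Fin d → K) :
    ∑ n ∈ univ.filter (fun n : Fin d → Fin N => StrictMono n ∧ ∀ i, lo < (n i : ℕ)),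
      ∏ i, (((n i : ℕ) : K) - x i)⁻¹ = mhs lo N (List.ofFn x) := by
  induction d generalizing lo with
  | zero => simp [Subsingleton.strictMono]
  | succ d ih =>
    have cond (k : Fin N) (t : Fin d → Fin N) :
        (StrictMono (Fin.cons k t : Fin (d + 1) → Fin N)
            ∧ ∀ i, lo < ((Fin.cons k t : Fin (d + 1) → Fin N) i : ℕ))
          ↔ lo < k ∧ StrictMono t ∧ ∀ i, (k : ℕ) < t i := by
      simp only [Fin.strictMono_cons, Fin.forall_fin_succ, Fin.cons_zero, Fin.cons_succ]
      exact ⟨fun ⟨⟨hkt, ht⟩, hk, _⟩ => ⟨hk, ht, hkt⟩,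
        fun ⟨hk, ht, hkt⟩ => ⟨⟨hkt, ht⟩, hk, fun i => hk.trans (hkt i)⟩⟩
    rw [sum_filter, ← (Fin.consEquiv _).sum_comp, Fintype.sum_prod_type]
    calc _ = ∑ k : Fin N, if lo < (k : ℕ)
          then ((k : ℕ) - x 0)⁻¹ * mhs k N (List.ofFn fun i => x i.succ) else 0 := by
          refine sum_congr rfl fun k _ => ?_
          simp only [Fin.consEquiv, Equiv.coe_fn_mk, cond, Fin.prod_univ_succ, Fin.cons_zero,
            Fin.cons_succ, ite_and]
          split_ifs
          · simp only [← ih, mul_sum, sum_filter, mul_ite_zero, ite_and]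
          · simp
      _ = mhs lo N (List.ofFn x) := by
          rw [Fin.sum_univ_eq_sum_range (fun m => if lo < m
            then ((m : K) - x 0)⁻¹ * mhs m N (List.ofFn fun i => x i.succ) else 0), ← sum_filter,
            List.ofFn_succ, mhs_cons]
          congr 1
          ext m
          simp only [mem_filter, mem_range, mem_Ico]
          omega

end MultipleHarmonicSum

theorem List.map_range_ite_eq_replicate_append {α : Type*} (a b : ℕ) (c t : α) :
    (range (a + b + 1)).map (fun m => if m = a then c else t)
      = replicate a t ++ c :: replicate b t := by
  refine ext_getElem (by simp; omega) fun i _ _ => ?_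
  rcases lt_trichotomy i a with h | rfl | h
  · simp [getElem_append_left, h, h.ne]
  · simp
  · obtain ⟨j, rfl⟩ := Nat.exists_eq_add_of_lt h
    rw [getElem_append_right (by simp; omega)]
    simp [add_assoc]

theorem inv_mul_inv_eq_inv_mul_inv_sub_inv {K : Type*} [Field K] {u v w : K} (hu : u ≠ 0)
    (hv : v ≠ 0) (hw : w ≠ 0) (h : v - u = w) : u⁻¹ * v⁻¹ = w⁻¹ * (u⁻¹ - v⁻¹) := by
  subst h
  rw [inv_sub_inv' hu hv]
  field_simp

namespace RatFunc

variable {K : Type*} [Field K]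

theorem C_sub_C_mul_X_ne_zero (c : K) {d : K} (hd : d ≠ 0) : C c - C d * X ≠ 0 := by
  rw [← algebraMap_C, ← algebraMap_C, ← algebraMap_X, ← map_mul, ← map_sub, Ne,
    map_eq_zero_iff _ (algebraMap_injective K)]
  intro h
  simpa [hd] using congrArg (Polynomial.coeff · 1) h

theorem natCast_sub_X_ne_zero (m : ℕ) : (m : RatFunc K) - X ≠ 0 := by
  simpa using C_sub_C_mul_X_ne_zero (m : K) one_ne_zero

theorem X_sub_one_ne_zero : (X : RatFunc K) - 1 ≠ 0 := by
  rw [← neg_sub, neg_ne_zero]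
  simpa using C_sub_C_mul_X_ne_zero (1 : K) one_ne_zero

theorem two_ne_zero_of_two_ne_zero (h2 : (2 : K) ≠ 0) : (2 : RatFunc K) ≠ 0 := by
  simpa [map_ofNat] using (map_ne_zero C).2 h2

theorem natCast_sub_two_mul_X_ne_zero (h2 : (2 : K) ≠ 0) (m : ℕ) :
    (m : RatFunc K) - 2 * X ≠ 0 := by
  simpa [map_ofNat] using C_sub_C_mul_X_ne_zero (m : K) h2

theorem natCast_sub_two_mul_X_sub_one_ne_zero (h2 : (2 : K) ≠ 0) (m : ℕ) :
    (m : RatFunc K) - (2 * X - 1) ≠ 0 := by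
  simpa [map_ofNat, sub_sub_eq_add_sub] using C_sub_C_mul_X_ne_zero ((m : K) + 1) h2

end RatFunc

open RatFunc

section PrimeField

variable {p : ℕ} [Fact p.Prime]

lemma f_eq_mhs {d : ℕ} (x : Fin d → RatFunc (ZMod p)) : f p x = mhs 0 p (List.ofFn x) := by
  rw [f, ← sum_strictMono_prod_inv_eq_mhs]
  simp only [StrictMono, Nat.pos_iff_ne_zero]

lemma f_const (n : ℕ) (t : RatFunc (ZMod p)) :
    f p (fun _ : Fin n => t) = mhs 0 p (List.replicate n t) := by
  rw [f_eq_mhs, List.ofFn_const]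

lemma f_ite_eq_mhs (a b : ℕ) (c t : RatFunc (ZMod p)) :
    f p (fun i : Fin ((a : ℤ) + b + 1).toNat => if (i : ℤ) = a then c else t)
      = mhs 0 p (List.replicate a t ++ c :: List.replicate b t) := by
  have hn : ((a : ℤ) + b + 1).toNat = a + b + 1 := by omega
  calc _ = mhs 0 p ((List.range ((a : ℤ) + b + 1).toNat).map
        fun m : ℕ => if (m : ℤ) = a then c else t) := by
        rw [f_eq_mhs, List.ofFn_eq_map, ← List.map_coe_finRange_eq_range, List.map_map]
        rfl
    _ = _ := by simp only [hn, Nat.cast_inj, List.map_range_ite_eq_replicate_append]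

lemma S_natCast (a b : ℕ) (t : RatFunc (ZMod p)) :
    S p a b t = mhs 0 p (List.replicate a t ++ (2 * t - 1) :: List.replicate b t) := by
  rw [S, if_pos ⟨a.cast_nonneg, b.cast_nonneg⟩, f_ite_eq_mhs]

lemma G_natCast (a b : ℕ) (t : RatFunc (ZMod p)) :
    G p a b t = mhs 0 p (List.replicate a t ++ (2 * t) :: List.replicate b t) := by
  rw [G, if_pos ⟨a.cast_nonneg, b.cast_nonneg⟩, f_ite_eq_mhs]

lemma S_neg_one (b : ℕ) (t : RatFunc (ZMod p)) :
    S p (-1) b t = t / (2 * t - 1) * mhs 0 p (List.replicate b t) := by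
  rw [S, if_neg (by omega), show (-1 + (b : ℤ) + 1).toNat = b by omega, f_const]

lemma G_neg_one (a : ℕ) (t : RatFunc (ZMod p)) :
    G p a (-1) t = 1 / 2 * mhs 0 p (List.replicate a t) := by
  rw [G, if_neg (by omega), show ((a : ℤ) + -1 + 1).toNat = a by omega, f_const]

lemma ZMod.two_ne_zero_of_ne_two (hp2 : p ≠ 2) : (2 : ZMod p) ≠ 0 :=
  Ring.two_ne_zero (by rwa [ZMod.ringChar_zmod_n])

lemma sum_lower_diff_eq_S (hp2 : p ≠ 2) (a b : ℕ) :
    mhs 0 1 (List.replicate a X) * (1 - 2 * X)⁻¹ * mhs 0 p (List.replicate b X)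
      + ∑ m ∈ Ico 1 p, (mhs 0 (m + 1) (List.replicate a X) - mhs 0 m (List.replicate a X))
          * ((m : RatFunc (ZMod p)) - (2 * X - 1))⁻¹ * mhs m p (List.replicate b X)
      = (X - 1)⁻¹ * (S p ((a : ℤ) - 1) b X - f p (fun _ : Fin (a + b) => X)) := by
  have h2 := ZMod.two_ne_zero_of_ne_two hp2
  have hX1 := X_sub_one_ne_zero (K := ZMod p)
  cases a with
  | zero =>
    have h12X : (1 : RatFunc (ZMod p)) - 2 * X ≠ 0 := by
      simpa using natCast_sub_two_mul_X_ne_zero h2 1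
    have h2X1 : (2 : RatFunc (ZMod p)) * X - 1 ≠ 0 := by
      rwa [← neg_sub, neg_ne_zero]
    simp only [List.replicate_zero, mhs_nil, sub_self, zero_mul, sum_const_zero, add_zero,
      one_mul, Nat.cast_zero, zero_sub, zero_add, S_neg_one, f_const]
    field_simp
    ring
  | succ a =>
    have hsum : ∀ m ∈ Ico 1 p,
        (mhs 0 (m + 1) (List.replicate (a + 1) X) - mhs 0 m (List.replicate (a + 1) X))
          * ((m : RatFunc (ZMod p)) - (2 * X - 1))⁻¹ * mhs m p (List.replicate b X)
        = (X - 1)⁻¹ * (mhs 0 m (List.replicate a X) * ((m : RatFunc (ZMod p)) - (2 * X - 1))⁻¹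
              * mhs m p (List.replicate b X)
            - mhs 0 m (List.replicate a X) * ((m : RatFunc (ZMod p)) - X)⁻¹
              * mhs m p (List.replicate b X)) := by
      intro m hm
      rw [List.replicate_succ', mhs_succ_append_singleton_sub (mem_Ico.1 hm).1]
      have hpf := inv_mul_inv_eq_inv_mul_inv_sub_inv
        (natCast_sub_two_mul_X_sub_one_ne_zero h2 m) (natCast_sub_X_ne_zero m) hX1 (by ring)
      linear_combination (mhs 0 m (List.replicate a X) * mhs m p (List.replicate b X)) * hpf
    rw [sum_congr rfl hsum, ← mul_sum, sum_sub_distrib, ← mhs_append_cons, ← mhs_append_cons,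
      List.replicate_succ, mhs_cons_eq_zero le_rfl, Nat.cast_succ, add_sub_cancel_right,
      S_natCast, f_const, ← List.replicate_succ, ← List.replicate_add,
      show a + 1 + b = a + (b + 1) by omega, zero_mul, zero_mul, zero_add]

lemma sum_upper_diff_eq_G (hp2 : p ≠ 2) (a b : ℕ) :
    mhs 0 p (List.replicate a X) * ((p : RatFunc (ZMod p)) - 2 * X)⁻¹
        * mhs (p - 1) p (List.replicate b X)
      + ∑ m ∈ Ico 1 p, mhs 0 m (List.replicate a X) * ((m : RatFunc (ZMod p)) - 2 * X)⁻¹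
          * (mhs (m - 1) p (List.replicate b X) - mhs m p (List.replicate b X))
      = X⁻¹ * (G p a ((b : ℤ) - 1) X - f p (fun _ : Fin (a + b) => X)) := by
  have h2 := ZMod.two_ne_zero_of_ne_two hp2
  have hX := X_ne_zero (K := ZMod p)
  cases b with
  | zero =>
    have h2' := two_ne_zero_of_two_ne_zero h2
    simp only [List.replicate_zero, mhs_nil, sub_self, mul_zero, sum_const_zero, add_zero,
      mul_one, CharP.cast_eq_zero, zero_sub, G_neg_one, f_const]
    field_simp
    ring
  | succ b =>
    have hsum : ∀ m ∈ Ico 1 p,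
        mhs 0 m (List.replicate a X) * ((m : RatFunc (ZMod p)) - 2 * X)⁻¹
          * (mhs (m - 1) p (List.replicate (b + 1) X) - mhs m p (List.replicate (b + 1) X))
        = X⁻¹ * (mhs 0 m (List.replicate a X) * ((m : RatFunc (ZMod p)) - 2 * X)⁻¹
              * mhs m p (List.replicate b X)
            - mhs 0 m (List.replicate a X) * ((m : RatFunc (ZMod p)) - X)⁻¹
              * mhs m p (List.replicate b X)) := by
      intro m hm
      obtain ⟨hm1, hmp⟩ := mem_Ico.1 hm
      rw [List.replicate_succ, mhs_pred_cons_sub hm1 hmp]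
      have hpf := inv_mul_inv_eq_inv_mul_inv_sub_inv
        (natCast_sub_two_mul_X_ne_zero h2 m) (natCast_sub_X_ne_zero m) hX (by ring)
      linear_combination (mhs 0 m (List.replicate a X) * mhs m p (List.replicate b X)) * hpf
    have hp := (Fact.out : p.Prime).pos
    rw [sum_congr rfl hsum, ← mul_sum, sum_sub_distrib, ← mhs_append_cons, ← mhs_append_cons,
      List.replicate_succ, mhs_cons_eq_zero (by omega), Nat.cast_succ, add_sub_cancel_right,
      G_natCast, f_const, ← List.replicate_succ, ← List.replicate_add, mul_zero, zero_add]

end PrimeField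

theorem S_sub_G_identity_general (p : ℕ) [Fact p.Prime] (hp2 : p ≠ 2) (a b : ℕ) :
    S p a b RatFunc.X - G p a b RatFunc.X
      = (RatFunc.X * (RatFunc.X - 1))⁻¹ * f p (fun _ : Fin (a + b) => RatFunc.X)
        - (RatFunc.X - 1)⁻¹ * S p ((a : ℤ) - 1) b RatFunc.X
        + (RatFunc.X)⁻¹ * G p a ((b : ℤ) - 1) RatFunc.X := by
  have hp : 1 ≤ p := (Fact.out : p.Prime).pos
  rw [S_natCast, G_natCast, mhs_append_sub_one_cons_sub hp, sum_upper_diff_eq_G hp2,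
    sum_lower_diff_eq_S hp2]
  have hX := X_ne_zero (K := ZMod p)
  have hX1 := X_sub_one_ne_zero (K := ZMod p)
  field_simp
  ring

/-- For an odd prime `p` and integers `a, b ≥ 0` with `a + b < p`, one has in `𝔽_p(x)`:
`S_{a,b}(x) - G_{a,b}(x) = (x(x-1))⁻¹ f(x,…,x) - (x-1)⁻¹ S_{a-1,b}(x) + x⁻¹ G_{a,b-1}(x)`,
with `a + b` copies of `x` in `f(x,…,x)`. -/
theorem S_sub_G_identity (p : ℕ) [Fact p.Prime] (hp2 : p ≠ 2) (a b : ℕ) (hab : a + b < p) :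
    S p a b RatFunc.X - G p a b RatFunc.X
      = (RatFunc.X * (RatFunc.X - 1))⁻¹ * f p (fun _ : Fin (a + b) => RatFunc.X)
        - (RatFunc.X - 1)⁻¹ * S p ((a : ℤ) - 1) b RatFunc.X
        + (RatFunc.X)⁻¹ * G p a ((b : ℤ) - 1) RatFunc.X :=
  S_sub_G_identity_general p hp2 a b
end

section
/- Let p be a prime and q ∈ F_p(x) a rational function such that: (i) q(x−1) = q(x) (i.e., q is invariant under the substitution x ↦ x−1); (ii) q admits a representation q = A/B with polynomials A, B ∈ F_p[x], deg A < deg B, and B a product of linear factors x − n with n ∈ F_p (equivalently, B divides a power of x^p − x); and (iii) q has no pole at x = 0. Then q = 0. -/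
/-! The denominator `d` of `q` divides `d ∘ (x - 1)`, because `q ∘ (x - 1) = q` is also a quotient
with denominator `d ∘ (x - 1)`. Hence the roots of `d` in `𝔽_p` are stable under `c ↦ c - 1`, and
iterating from any root reaches `0`. A root exists: `d ∣ B` splits over `𝔽_p`, and `deg A < deg B`
makes `d` nonconstant once `q ≠ 0`. But `d ∣ D` and `D(0) ≠ 0`. -/

open Polynomial

namespace RatFunc

variable {K : Type*} [Field K]

theorem natDegree_denom_pos_of_degree_lt {q : RatFunc K} (hq : q ≠ 0) {A B : K[X]}
    (hAB : q = algebraMap K[X] (RatFunc K) A / algebraMap K[X] (RatFunc K) B)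
    (hdeg : A.degree < B.degree) : 0 < q.denom.natDegree := by
  have hB : B ≠ 0 := ne_zero_of_degree_gt hdeg
  have hA : A ≠ 0 := by rintro rfl; simp [hAB] at hq
  have hint : q.intDegree = A.natDegree - B.natDegree := by
    rw [hAB, div_eq_mul_inv, intDegree_mul (by simpa using hA) (by simpa using hB),
      intDegree_inv, intDegree_polynomial, intDegree_polynomial, sub_eq_add_neg]
  have := natDegree_lt_natDegree hA hdeg
  unfold intDegree at hint
  omega

theorem eval_algebraMap_eq_div_comp (q : RatFunc K) (r : K[X]) :
    eval (algebraMap K (RatFunc K)) (algebraMap K[X] (RatFunc K) r) q =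
      algebraMap K[X] (RatFunc K) (q.num.comp r) /
        algebraMap K[X] (RatFunc K) (q.denom.comp r) := by
  simp only [eval, comp, hom_eval₂, ← algebraMap_eq, ← IsScalarTower.algebraMap_eq]

theorem denom_dvd_denom_comp_of_eval_eq {q : RatFunc K} {r : K[X]} (hr : 0 < r.natDegree)
    (h : eval (algebraMap K (RatFunc K)) (algebraMap K[X] (RatFunc K) r) q = q) :
    q.denom ∣ q.denom.comp r := by
  have hne : q.denom.comp r ≠ 0 := by
    rw [Ne, comp_eq_zero_iff, not_or]
    exact ⟨q.denom_ne_zero, fun ⟨_, hC⟩ => hr.ne' (by rw [hC, natDegree_C])⟩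
  exact (denom_dvd hne).mpr ⟨_, by rw [← eval_algebraMap_eq_div_comp, h]⟩

end RatFunc

namespace Polynomial

theorem isRoot_sub_natCast_of_dvd_comp_X_sub_one {R : Type*} [CommRing R] {P : R[X]}
    (hP : P ∣ P.comp (X - 1)) {c : R} (hc : P.IsRoot c) (n : ℕ) : P.IsRoot (c - n) := by
  induction n with
  | zero => simpa using hc
  | succ n ih =>
    have := eval_eq_zero_of_dvd_of_eval_eq_zero hP ih
    rwa [eval_comp, eval_sub, eval_X, eval_one, sub_sub, ← Nat.cast_add_one] at this

theorem isRoot_zero_of_dvd_comp_X_sub_one {n : ℕ} [NeZero n] {P : (ZMod n)[X]}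
    (hP : P ∣ P.comp (X - 1)) {c : ZMod n} (hc : P.IsRoot c) : P.IsRoot 0 := by
  simpa using isRoot_sub_natCast_of_dvd_comp_X_sub_one hP hc c.val

theorem splits_X_pow_card_sub_X (K : Type*) [Field K] [Fintype K] :
    (X ^ Fintype.card K - X : K[X]).Splits := by
  rw [splits_iff_card_roots, FiniteField.roots_X_pow_card_sub_X,
    FiniteField.X_pow_card_sub_X_natDegree_eq K Fintype.one_lt_card]
  rfl

theorem exists_isRoot_of_dvd_X_pow_card_sub_X_pow {K : Type*} [Field K] [Fintype K] {P : K[X]}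
    {m : ℕ} (hP : P ∣ (X ^ Fintype.card K - X) ^ m) (hdeg : 0 < P.natDegree) :
    ∃ c, P.IsRoot c :=
  ((splits_X_pow_card_sub_X K).pow m).of_dvd
    (pow_ne_zero m (FiniteField.X_pow_card_sub_X_ne_zero K Fintype.one_lt_card)) hP
    |>.exists_eval_eq_zero (degree_ne_of_natDegree_ne hdeg.ne')

end Polynomial

/-- Let `p` be a prime and `q ∈ 𝔽_p(x)` a rational function such that:
(i) `q(x-1) = q(x)`, i.e. `q` is invariant under the substitution `x ↦ x - 1`;
(ii) `q = A/B` with polynomials `A, B ∈ 𝔽_p[x]`, `deg A < deg B`, and `B` dividing a power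
of `x^p - x` (equivalently, `B` a product of linear factors `x - n` with `n ∈ 𝔽_p`);
(iii) `q` has no pole at `x = 0`, i.e. `q = C/D` with `D(0) ≠ 0`.
Then `q = 0`. -/
theorem shift_invariant_ratfunc_eq_zero (p : ℕ) [Fact p.Prime] (q : RatFunc (ZMod p))
    (hshift : RatFunc.eval (algebraMap (ZMod p) (RatFunc (ZMod p))) (RatFunc.X - 1) q = q)
    (hrep : ∃ A B : Polynomial (ZMod p),
      q = algebraMap (Polynomial (ZMod p)) (RatFunc (ZMod p)) A /
            algebraMap (Polynomial (ZMod p)) (RatFunc (ZMod p)) B ∧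
      A.degree < B.degree ∧
      ∃ m : ℕ, B ∣ (Polynomial.X ^ p - Polynomial.X) ^ m)
    (hnopole : ∃ C D : Polynomial (ZMod p), D.eval 0 ≠ 0 ∧
      q = algebraMap (Polynomial (ZMod p)) (RatFunc (ZMod p)) C /
            algebraMap (Polynomial (ZMod p)) (RatFunc (ZMod p)) D) :
    q = 0 := by
  by_contra hq
  obtain ⟨A, B, hAB, hdeg, m, hBdvd⟩ := hrep
  obtain ⟨C, D, hD0, hCD⟩ := hnopole
  have hB : B ≠ 0 := ne_zero_of_degree_gt hdeg
  have hD : D ≠ 0 := by rintro rfl; simp at hD0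
  obtain ⟨c, hc⟩ : ∃ c, q.denom.IsRoot c := by
    refine exists_isRoot_of_dvd_X_pow_card_sub_X_pow (m := m) ?_
      (RatFunc.natDegree_denom_pos_of_degree_lt hq hAB hdeg)
    rw [ZMod.card]
    exact ((RatFunc.denom_dvd hB).mpr ⟨A, hAB⟩).trans hBdvd
  have hperiodic : q.denom ∣ q.denom.comp (X - 1) := by
    refine RatFunc.denom_dvd_denom_comp_of_eval_eq (by rw [← C_1, natDegree_X_sub_C]; simp) ?_
    simpa using hshift
  exact hD0 (eval_eq_zero_of_dvd_of_eval_eq_zero ((RatFunc.denom_dvd hD).mpr ⟨C, hCD⟩)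
    (isRoot_zero_of_dvd_comp_X_sub_one hperiodic hc))
end
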